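/- arXiv:2309.05590 — 2 statements merged into one kernel-verified Lean document; each statement's English description precedes it below -/
import Mathlib

section
/- Let a, b ∈ ℝⁿ be nonzero vectors, and let x = a + s·b and y = a + t·b with s, t ∈ [0, ∞) and x, y ≠ 0. Then the angle between x and y is at most the angle between a and b, i.e., cos(angle(x,y)) ≥ cos(angle(a,b)). -/
open InnerProductGeometry

/-!
Both `a + s • b` and `a + t • b` lie in the convex cone spanned by `a` and `b`, and for `s ≤ t` the
rays through `a`, `a + s • b`, `a + t • b`, `b` occur in this order inside it. Angles between rays
of a cone are additive, so the angle between the two middle rays is part of the angle between the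
outer ones, and `cos` is antitone on `[0, π]`.
-/

namespace InnerProductGeometry

variable {V : Type*} [NormedAddCommGroup V] [InnerProductSpace ℝ V]

theorem angle_add_angle_add_smul (u v : V) {r : ℝ} (hr : 0 ≤ r) (h : u + r • v ≠ 0) :
    angle u (u + r • v) + angle (u + r • v) v = angle u v := by
  refine (angle_eq_angle_add_add_angle_add_of_mem_span h ?_).symm
  exact Submodule.mem_span_pair.mpr ⟨1, ⟨r, hr⟩, by rw [one_smul]; rfl⟩

theorem angle_add_smul_add_smul_le (u v : V) {s t : ℝ} (hs : 0 ≤ s) (hst : s ≤ t)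
    (hs0 : u + s • v ≠ 0) (ht0 : u + t • v ≠ 0) :
    angle (u + s • v) (u + t • v) ≤ angle u v := by
  have hy : u + t • v = (u + s • v) + (t - s) • v := by
    rw [add_assoc, ← add_smul, add_sub_cancel]
  have h₁ := angle_add_angle_add_smul u v hs hs0
  have h₂ := angle_add_angle_add_smul (u + s • v) v (sub_nonneg.mpr hst) (hy ▸ ht0)
  rw [← hy] at h₂
  linarith [angle_nonneg u (u + s • v), angle_nonneg (u + t • v) v]

end InnerProductGeometry

theorem stmt_1_general (n : ℕ) (a b : EuclideanSpace ℝ (Fin n))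
    (s t : ℝ) (hs : 0 ≤ s) (ht : 0 ≤ t)
    (x y : EuclideanSpace ℝ (Fin n))
    (hx : x = a + s • b) (hy : y = a + t • b)
    (hx0 : x ≠ 0) (hy0 : y ≠ 0) :
    Real.cos (angle a b) ≤ Real.cos (angle x y) := by
  have hxy : angle x y ≤ angle a b := by
    subst hx hy
    rcases le_total s t with hst | hts
    · exact angle_add_smul_add_smul_le a b hs hst hx0 hy0
    · rw [angle_comm]
      exact angle_add_smul_add_smul_le a b ht hts hy0 hx0
  exact Real.cos_le_cos_of_nonneg_of_le_pi (angle_nonneg x y) (angle_le_pi a b) hxy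

theorem stmt_1 (n : ℕ) (a b : EuclideanSpace ℝ (Fin n))
    (ha : a ≠ 0) (hb : b ≠ 0) (s t : ℝ) (hs : 0 ≤ s) (ht : 0 ≤ t)
    (x y : EuclideanSpace ℝ (Fin n))
    (hx : x = a + s • b) (hy : y = a + t • b)
    (hx0 : x ≠ 0) (hy0 : y ≠ 0) :
    Real.cos (angle a b) ≤ Real.cos (angle x y) :=
  stmt_1_general n a b s t hs ht x y hx hy hx0 hy0
end

section
/- Let a, b ∈ ℝⁿ be linearly independent vectors, and let x, y be any two points in the convex hull of {a, b} (the segment from a to b). Then the angle between the position vectors x and y is at most the angle between a and b. -/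
set_option maxHeartbeats 1000000

open InnerProductGeometry
open scoped RealInnerProductSpace

private lemma arccos_antitone {u v : ℝ} (h : v ≤ u) : Real.arccos u ≤ Real.arccos v := by
  unfold Real.arccos
  have := Real.monotone_arcsin h
  linarith

private theorem key (A B C I X Y s q t r : ℝ) (hs : 0 ≤ s) (hq : 0 ≤ q) (ht : 0 ≤ t) (hr : 0 ≤ r)
    (hA : 0 < A) (hB : 0 < B) (hX : 0 < X) (hY : 0 < Y)
    (hC : C^2 ≤ A^2*B^2)
    (hX2 : X^2 = s^2*A^2 + 2*(s*q)*C + q^2*B^2)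
    (hY2 : Y^2 = t^2*A^2 + 2*(t*r)*C + r^2*B^2)
    (hI : I = s*t*A^2 + (s*r+q*t)*C + q*r*B^2) :
    C * (X*Y) ≤ I * (A*B) := by
  have hid : X^2*Y^2 = I^2 + (A^2*B^2 - C^2)*(s*r-q*t)^2 := by rw [hX2, hY2, hI]; ring
  have hD : 0 ≤ A^2*B^2 - C^2 := by linarith
  rcases le_or_gt 0 C with hC0 | hC0
  · -- C ≥ 0 case
    have hI0 : 0 ≤ I := by
      have := mul_nonneg (mul_nonneg hs ht) (sq_nonneg A)
      have := mul_nonneg (mul_nonneg hq hr) (sq_nonneg B)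
      have h1 : 0 ≤ (s*r+q*t)*C := mul_nonneg (by positivity) hC0
      linarith
    have hF1 : 0 ≤ I - C*(s*r-q*t) := by
      have h1 : I - C*(s*r-q*t) = s*t*A^2 + q*r*B^2 + 2*(q*t)*C := by rw [hI]; ring
      rw [h1]; positivity
    have hF2 : 0 ≤ I + C*(s*r-q*t) := by
      have h1 : I + C*(s*r-q*t) = s*t*A^2 + q*r*B^2 + 2*(s*r)*C := by rw [hI]; ring
      rw [h1]; positivity
    have hsq : (C*(X*Y))^2 ≤ (I*(A*B))^2 := by
      have h2 : 0 ≤ (A^2*B^2 - C^2) * (I^2 - (C*(s*r-q*t))^2) := by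
        apply mul_nonneg hD
        nlinarith [mul_nonneg hF1 hF2]
      nlinarith [hid, sq_nonneg (s*r - q*t)]
    nlinarith [mul_pos hX hY, mul_pos hA hB, mul_nonneg hC0 (mul_pos hX hY).le,
      mul_nonneg hI0 (mul_pos hA hB).le]
  · rcases le_or_gt 0 I with hI0 | hI0
    · have : C * (X*Y) ≤ 0 := mul_nonpos_of_nonpos_of_nonneg hC0.le (by positivity)
      have : 0 ≤ I * (A*B) := mul_nonneg hI0 (by positivity)
      linarith
    · -- C < 0, I < 0
      have hCab : -C ≤ A*B := by nlinarith [sq_nonneg (A*B + C), mul_pos hA hB]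
      have hFprod : 0 ≤ -(I^2 - (C*(s*r-q*t))^2) := by
        rcases le_or_gt (q*t) (s*r) with hd | hd
        · have hF1 : 0 ≤ I - C*(s*r-q*t) := by
            have h1 : I - C*(s*r-q*t) = s*t*A^2 + q*r*B^2 + 2*(q*t)*C := by rw [hI]; ring
            have hamgm : 2*(q*t)*(A*B) ≤ s*t*A^2 + q*r*B^2 := by
              nlinarith [sq_nonneg (s*t*A^2 - q*r*B^2), mul_nonneg (mul_nonneg hq ht) (sub_nonneg.2 hd),
                mul_pos (mul_pos hA hB) (mul_pos hA hB), mul_nonneg (mul_nonneg hs ht) (sq_nonneg A),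
                mul_nonneg (mul_nonneg hq hr) (sq_nonneg B), mul_nonneg (mul_nonneg hq ht) (mul_pos hA hB).le]
            have h2 : 2*(q*t)*(-C) ≤ 2*(q*t)*(A*B) := by
              apply mul_le_mul_of_nonneg_left hCab (by positivity)
            rw [h1]; linarith
          have hF2 : I + C*(s*r-q*t) < 0 := by
            have : C*(s*r-q*t) ≤ 0 := mul_nonpos_of_nonpos_of_nonneg hC0.le (by linarith)
            linarith
          nlinarith [mul_nonneg hF1 (neg_nonneg.2 hF2.le)]
        · have hF2 : 0 ≤ I + C*(s*r-q*t) := by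
            have h1 : I + C*(s*r-q*t) = s*t*A^2 + q*r*B^2 + 2*(s*r)*C := by rw [hI]; ring
            have hamgm : 2*(s*r)*(A*B) ≤ s*t*A^2 + q*r*B^2 := by
              nlinarith [sq_nonneg (s*t*A^2 - q*r*B^2), mul_nonneg (mul_nonneg hs hr) (sub_nonneg.2 hd.le),
                mul_pos (mul_pos hA hB) (mul_pos hA hB), mul_nonneg (mul_nonneg hs ht) (sq_nonneg A),
                mul_nonneg (mul_nonneg hq hr) (sq_nonneg B), mul_nonneg (mul_nonneg hs hr) (mul_pos hA hB).le]
            have h2 : 2*(s*r)*(-C) ≤ 2*(s*r)*(A*B) := by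
              apply mul_le_mul_of_nonneg_left hCab (by positivity)
            rw [h1]; linarith
          have hF1 : I - C*(s*r-q*t) < 0 := by
            have : 0 ≤ C*(s*r-q*t) := mul_nonneg_of_nonpos_of_nonpos hC0.le (by linarith : s*r-q*t ≤ 0)
            linarith
          nlinarith [mul_nonneg (neg_nonneg.2 hF1.le) hF2]
      have hsq : (I*(A*B))^2 ≤ (C*(X*Y))^2 := by
        have h2 : 0 ≤ (A^2*B^2 - C^2) * (-(I^2 - (C*(s*r-q*t))^2)) := mul_nonneg hD hFprod
        nlinarith [hid]
      nlinarith [mul_pos hX hY, mul_pos hA hB, mul_pos (mul_pos hX hY) (neg_pos.2 hC0),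
        mul_nonneg (mul_pos hA hB).le (neg_pos.2 hI0).le]

theorem stmt_2 (n : ℕ) (a b : EuclideanSpace ℝ (Fin n))
    (hab : LinearIndependent ℝ ![a, b])
    (x y : EuclideanSpace ℝ (Fin n))
    (hx : x ∈ convexHull ℝ ({a, b} : Set (EuclideanSpace ℝ (Fin n))))
    (hy : y ∈ convexHull ℝ ({a, b} : Set (EuclideanSpace ℝ (Fin n)))) :
    angle x y ≤ angle a b := by
  rw [convexHull_pair] at hx hy
  obtain ⟨s, q, hs, hq, hsq, hxe⟩ := hx
  obtain ⟨t, r, ht, hr, htr, hye⟩ := hy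
  have hpair := LinearIndependent.pair_iff.1 hab
  have ha : a ≠ 0 := by
    intro h; obtain ⟨h1, -⟩ := hpair 1 0 (by simp [h]); norm_num at h1
  have hb : b ≠ 0 := by
    intro h; obtain ⟨-, h2⟩ := hpair 0 1 (by simp [h]); norm_num at h2
  have hx0 : x ≠ 0 := by
    intro h; rw [h] at hxe; obtain ⟨h1, h2⟩ := hpair s q hxe; rw [h1, h2] at hsq; norm_num at hsq
  have hy0 : y ≠ 0 := by
    intro h; rw [h] at hye; obtain ⟨h1, h2⟩ := hpair t r hye; rw [h1, h2] at htr; norm_num at htr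
  have hA : 0 < ‖a‖ := norm_pos_iff.2 ha
  have hB : 0 < ‖b‖ := norm_pos_iff.2 hb
  have hX : 0 < ‖x‖ := norm_pos_iff.2 hx0
  have hY : 0 < ‖y‖ := norm_pos_iff.2 hy0
  set C : ℝ := (⟪a, b⟫ : ℝ) with hCdef
  have hC : C^2 ≤ ‖a‖^2 * ‖b‖^2 := by
    have h1 := abs_real_inner_le_norm a b
    nlinarith [abs_nonneg C, sq_abs C, norm_nonneg a, norm_nonneg b]
  have hI : ⟪x, y⟫ = s*t*‖a‖^2 + (s*r+q*t)*C + q*r*‖b‖^2 := by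
    rw [← hxe, ← hye]
    simp only [inner_add_left, inner_add_right, real_inner_smul_left, real_inner_smul_right,
      hCdef, real_inner_comm b a]
    simp only [real_inner_self_eq_norm_sq]
    ring
  have hX2 : ‖x‖^2 = s^2*‖a‖^2 + 2*(s*q)*C + q^2*‖b‖^2 := by
    rw [← real_inner_self_eq_norm_sq, ← hxe]
    simp only [inner_add_left, inner_add_right, real_inner_smul_left, real_inner_smul_right,
      hCdef, real_inner_comm b a]
    simp only [real_inner_self_eq_norm_sq]
    ring
  have hY2 : ‖y‖^2 = t^2*‖a‖^2 + 2*(t*r)*C + r^2*‖b‖^2 := by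
    rw [← real_inner_self_eq_norm_sq, ← hye]
    simp only [inner_add_left, inner_add_right, real_inner_smul_left, real_inner_smul_right,
      hCdef, real_inner_comm b a]
    simp only [real_inner_self_eq_norm_sq]
    ring
  have hkey := key ‖a‖ ‖b‖ C ⟪x, y⟫ ‖x‖ ‖y‖ s q t r hs hq ht hr hA hB hX hY hC hX2 hY2 hI
  unfold InnerProductGeometry.angle
  apply arccos_antitone
  rw [div_le_div_iff₀ (by positivity) (by positivity)]
  linarith [hkey]
end
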